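/- arXiv:2112.14497 — 3 statements merged into one kernel-verified Lean document; each statement's English description precedes it below -/
import Mathlib

section
/- Let k ≥ 1 and let φ be a univariate polynomial of degree ≤ k on an interval [a,b], a < b, such that φ'(a) = φ'(b) = 0 and the L²-orthogonal projection of φ' onto polynomials of degree ≤ k−3 vanishes. Then φ' = 0, i.e., φ is constant. -/
open Polynomial intervalIntegral MeasureTheory

theorem edge_derivative_vanishes (k : ℕ) (hk : 1 ≤ k) (a b : ℝ) (hab : a < b)
    (φ : Polynomial ℝ) (hφ : φ.natDegree ≤ k)
    (ha : φ.derivative.eval a = 0) (hb : φ.derivative.eval b = 0)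
    (horth : ∀ p : Polynomial ℝ, p.natDegree + 3 ≤ k →
      ∫ x in a..b, φ.derivative.eval x * p.eval x = 0) :
    φ.derivative = 0 := by
  by_contra hne
  have hdvda : (X - C a) ∣ φ.derivative := dvd_iff_isRoot.2 ha
  have hdvdb : (X - C b) ∣ φ.derivative := dvd_iff_isRoot.2 hb
  have hcop : IsCoprime (X - C a) (X - C b : Polynomial ℝ) :=
    isCoprime_X_sub_C_of_isUnit_sub ((sub_ne_zero.2 hab.ne).isUnit)
  obtain ⟨q, hq⟩ := hcop.mul_dvd hdvda hdvdb
  have hXa : (X - C a : Polynomial ℝ) ≠ 0 := X_sub_C_ne_zero a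
  have hXb : (X - C b : Polynomial ℝ) ≠ 0 := X_sub_C_ne_zero b
  have hq0 : q ≠ 0 := by
    rintro rfl
    rw [mul_zero] at hq
    exact hne hq
  -- degree bookkeeping
  have hdeg : q.natDegree + 3 ≤ k := by
    have h1 : φ.derivative.natDegree ≤ φ.natDegree - 1 := natDegree_derivative_le φ
    have h2 : φ.derivative.natDegree = 2 + q.natDegree := by
      rw [hq, natDegree_mul (mul_ne_zero hXa hXb) hq0,
        natDegree_mul hXa hXb, natDegree_X_sub_C, natDegree_X_sub_C]
    omega
  have hI := horth q hdeg
  set f : ℝ → ℝ := fun x => (x - a) * (b - x) * q.eval x ^ 2 with hf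
  have hfc : Continuous f := by
    fun_prop
  have hfi : IntervalIntegrable f MeasureTheory.volume a b := hfc.intervalIntegrable a b
  have hfeq : ∀ x, f x = -(φ.derivative.eval x * q.eval x) := by
    intro x
    simp only [hf, hq, eval_mul, eval_sub, eval_X, eval_C]
    ring
  have hint : ∫ x in a..b, f x = 0 := by
    have : (∫ x in a..b, f x) = ∫ x in a..b, -(φ.derivative.eval x * q.eval x) := by
      congr 1
      funext x
      exact hfeq x
    rw [this, intervalIntegral.integral_neg, hI, neg_zero]
  have hnonneg : 0 ≤ᵐ[volume.restrict (Set.Ioc a b)] f := by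
    refine (MeasureTheory.ae_restrict_iff' measurableSet_Ioc).2 (Filter.Eventually.of_forall ?_)
    intro x hx
    have h1 : 0 ≤ x - a := by linarith [hx.1]
    have h2 : 0 ≤ b - x := by linarith [hx.2]
    positivity
  have hae : f =ᵐ[volume.restrict (Set.Ioc a b)] 0 :=
    (intervalIntegral.integral_eq_zero_iff_of_le_of_nonneg_ae hab.le hnonneg hfi).1 hint
  -- f is the evaluation of a polynomial P
  set P : Polynomial ℝ := (X - C a) * (C b - X) * q ^ 2 with hP
  have hPeval : ∀ x, P.eval x = f x := by
    intro x; simp [hP, hf]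
  have hPne : P ≠ 0 := by
    have : (C b - X : Polynomial ℝ) ≠ 0 := by
      intro h
      have := congrArg (fun p => Polynomial.eval (b + 1) p) h
      simp at this
    exact mul_ne_zero (mul_ne_zero hXa this) (pow_ne_zero 2 hq0)
  have hroots : Set.Finite {x : ℝ | P.IsRoot x} := Polynomial.finite_setOf_isRoot hPne
  -- measure argument: Ioc a b ⊆ roots ∪ {x ∈ Ioc a b | f x ≠ 0}, both null
  have hN : volume {x | x ∈ Set.Ioc a b ∧ f x ≠ 0} = 0 := by
    have h1 := (MeasureTheory.ae_restrict_iff' measurableSet_Ioc).1 hae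
    rw [MeasureTheory.ae_iff] at h1
    convert h1 using 2
    ext x
    simp only [Set.mem_setOf_eq, Pi.zero_apply]
    push_neg
    tauto
  have hsub : Set.Ioc a b ⊆ {x : ℝ | P.IsRoot x} ∪ {x | x ∈ Set.Ioc a b ∧ f x ≠ 0} := by
    intro x hx
    by_cases hfx : f x = 0
    · left
      simp only [Set.mem_setOf_eq, IsRoot]
      rw [hPeval x, hfx]
    · right
      exact ⟨hx, hfx⟩
  have hle : volume (Set.Ioc a b) = 0 := by
    refine measure_mono_null hsub ?_
    exact measure_union_null (hroots.measure_zero volume) hN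
  rw [Real.volume_Ioc] at hle
  have : b - a ≤ 0 := by
    by_contra hpos
    push_neg at hpos
    exact (ENNReal.ofReal_pos.2 hpos).ne' hle
  linarith
end

section
/- Let ℓ ≥ 2. The linear map sending a univariate polynomial q of degree ≤ ℓ on [0,1] to the triple (q(0), q(1), π^{ℓ−2}q), where π^{ℓ−2} is the L²([0,1])-orthogonal projection onto polynomials of degree ≤ ℓ−2, is a linear isomorphism from polynomials of degree ≤ ℓ onto ℝ × ℝ × (polynomials of degree ≤ ℓ−2). -/
/-!
The orthogonality conditions determine the projection uniquely (the difference of two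
candidates is orthogonal to itself), so it is linear. A polynomial `s` of degree `≤ ℓ` in the
kernel vanishes at `0` and `1`, hence `s = X (X - 1) t` with `deg t ≤ ℓ - 2`, and then
`0 = ∫₀¹ s t = -∫₀¹ t² x (1 - x) dx` forces `t = 0`. Both sides have dimension `ℓ + 1`, so the
injective linear map is bijective.
-/

open Polynomial intervalIntegral

namespace Polynomial

noncomputable def intervalIntegralₗ (a b : ℝ) : ℝ[X] →ₗ[ℝ] ℝ where
  toFun p := ∫ x in a..b, p.eval x
  map_add' p q := by
    simpa only [eval_add] using
      integral_add (p.continuous.intervalIntegrable a b) (q.continuous.intervalIntegrable a b)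
  map_smul' c p := by simp

@[simp]
theorem intervalIntegralₗ_apply (a b : ℝ) (p : ℝ[X]) :
    intervalIntegralₗ a b p = ∫ x in a..b, p.eval x := rfl

variable {a b : ℝ}

theorem eq_zero_of_intervalIntegralₗ_sq_mul_eq_zero (hab : a < b) {v w : ℝ[X]}
    (hv : ∀ x ∈ Set.Icc a b, 0 ≤ v.eval x) (hv₀ : v ≠ 0)
    (h : intervalIntegralₗ a b (w ^ 2 * v) = 0) : w = 0 := by
  by_contra hw
  obtain ⟨c, hc, hroot⟩ : ∃ c ∈ Set.Ioo a b, ¬(w * v).IsRoot c :=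
    ((Set.Ioo_infinite hab).sdiff (finite_setOfPred_isRoot (mul_ne_zero hw hv₀))).nonempty
  have hpos : 0 < intervalIntegralₗ a b (w ^ 2 * v) := by
    refine integral_pos hab (w ^ 2 * v).continuous.continuousOn
      (fun x hx ↦ ?_) ⟨c, Set.Ioo_subset_Icc_self hc, ?_⟩
    · simpa only [eval_mul, eval_pow] using
        mul_nonneg (sq_nonneg _) (hv x (Set.Ioc_subset_Icc_self hx))
    · simp only [IsRoot, eval_mul, mul_eq_zero, not_or] at hroot
      have hvc : 0 < v.eval c :=
        (hv c (Set.Ioo_subset_Icc_self hc)).lt_of_ne (Ne.symm hroot.2)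
      simpa only [eval_mul, eval_pow] using mul_pos (sq_pos_of_ne_zero hroot.1) hvc
  exact hpos.ne' h

theorem eq_zero_of_eval_eq_zero_of_orthogonal (hab : a < b) {n : ℕ} {s : ℝ[X]}
    (hs : s ∈ degreeLT ℝ (n + 2)) (ha : s.eval a = 0) (hb : s.eval b = 0)
    (horth : ∀ p ∈ degreeLT ℝ n, intervalIntegralₗ a b (s * p) = 0) : s = 0 := by
  obtain ⟨t, rfl⟩ : (X - C a) * (X - C b) ∣ s :=
    (isCoprime_X_sub_C_of_isUnit_sub (sub_ne_zero.mpr hab.ne).isUnit).mul_dvd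
      (dvd_iff_isRoot.mpr ha) (dvd_iff_isRoot.mpr hb)
  have hX : (X - C a) * (X - C b) ≠ 0 := mul_ne_zero (X_sub_C_ne_zero a) (X_sub_C_ne_zero b)
  suffices t = 0 by rw [this, mul_zero]
  have ht : t ∈ degreeLT ℝ n := by
    rw [mem_degreeLT, degree_mul, degree_mul, degree_X_sub_C, degree_X_sub_C] at hs
    rw [mem_degreeLT]
    rcases eq_or_ne t 0 with rfl | ht₀
    · simp
    · rw [degree_eq_natDegree ht₀] at hs ⊢
      norm_cast at hs ⊢
      omega
  refine eq_zero_of_intervalIntegralₗ_sq_mul_eq_zero hab (v := (X - C a) * (C b - X))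
    (fun x hx ↦ ?_) ?_ ?_
  · simpa using mul_nonneg (sub_nonneg.mpr hx.1) (sub_nonneg.mpr hx.2)
  · rwa [← neg_sub X (C b), mul_neg, neg_ne_zero]
  · rw [show t ^ 2 * ((X - C a) * (C b - X)) = -((X - C a) * (X - C b) * t * t) by ring,
      map_neg, horth t ht, neg_zero]

structure IsL2Proj (a b : ℝ) (n : ℕ) (proj : ℝ[X] → ℝ[X]) : Prop where
  mem_degreeLT : ∀ q, proj q ∈ degreeLT ℝ n
  orthogonal : ∀ q, ∀ p ∈ degreeLT ℝ n, intervalIntegralₗ a b ((q - proj q) * p) = 0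

namespace IsL2Proj

variable {n : ℕ} {proj : ℝ[X] → ℝ[X]}

theorem eq_of_orthogonal (hP : IsL2Proj a b n proj) (hab : a < b) {q u : ℝ[X]}
    (hu : u ∈ degreeLT ℝ n)
    (horth : ∀ p ∈ degreeLT ℝ n, intervalIntegralₗ a b ((q - u) * p) = 0) : proj q = u := by
  have hw : u - proj q ∈ degreeLT ℝ n := sub_mem hu (hP.mem_degreeLT q)
  have hw_sq : intervalIntegralₗ a b ((u - proj q) ^ 2 * 1) = 0 := by
    rw [show (u - proj q) ^ 2 * 1 = (q - proj q) * (u - proj q) - (q - u) * (u - proj q) by ring,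
      map_sub, hP.orthogonal q _ hw, horth _ hw, sub_zero]
  exact (sub_eq_zero.mp
    (eq_zero_of_intervalIntegralₗ_sq_mul_eq_zero hab (by simp) one_ne_zero hw_sq)).symm

theorem map_add (hP : IsL2Proj a b n proj) (hab : a < b) (q r : ℝ[X]) :
    proj (q + r) = proj q + proj r :=
  hP.eq_of_orthogonal hab (add_mem (hP.mem_degreeLT q) (hP.mem_degreeLT r)) fun p hp ↦ by
    rw [show (q + r - (proj q + proj r)) * p = (q - proj q) * p + (r - proj r) * p by ring,
      _root_.map_add, hP.orthogonal q p hp, hP.orthogonal r p hp, add_zero]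

theorem map_smul (hP : IsL2Proj a b n proj) (hab : a < b) (c : ℝ) (q : ℝ[X]) :
    proj (c • q) = c • proj q :=
  hP.eq_of_orthogonal hab (Submodule.smul_mem _ c (hP.mem_degreeLT q)) fun p hp ↦ by
    rw [← smul_sub, smul_mul_assoc, _root_.map_smul, hP.orthogonal q p hp, smul_zero]

noncomputable def toLinearMap (hP : IsL2Proj a b n proj) (hab : a < b) :
    ℝ[X] →ₗ[ℝ] ℝ[X] where
  toFun := proj
  map_add' := hP.map_add hab
  map_smul' := hP.map_smul hab

theorem bijOn_eval_eval_proj (hP : IsL2Proj a b n proj) (hab : a < b) :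
    Set.BijOn (fun q ↦ (q.eval a, q.eval b, proj q)) (degreeLT ℝ (n + 2))
      {t | t.2.2 ∈ degreeLT ℝ n} := by
  let L : degreeLT ℝ (n + 2) →ₗ[ℝ] ℝ × ℝ × degreeLT ℝ n :=
    ((leval a).prod ((leval b).prod
      ((hP.toLinearMap hab).codRestrict _ hP.mem_degreeLT))).domRestrict _
  have hL : ∀ q, L q = (q.1.eval a, q.1.eval b, ⟨proj q, hP.mem_degreeLT q⟩) := fun _ ↦ rfl
  have hinj : Function.Injective L := by
    refine (injective_iff_map_eq_zero L).mpr fun ⟨s, hs⟩ h ↦ ?_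
    simp only [hL, Prod.mk_eq_zero, Submodule.mk_eq_zero] at h
    obtain ⟨ha, hb, hproj⟩ := h
    refine Subtype.ext (eq_zero_of_eval_eq_zero_of_orthogonal hab hs ha hb fun p hp ↦ ?_)
    simpa only [hproj, sub_zero] using hP.orthogonal s p hp
  have hrank :
      Module.finrank ℝ (degreeLT ℝ (n + 2)) = Module.finrank ℝ (ℝ × ℝ × degreeLT ℝ n) := by
    simp only [Module.finrank_prod, Module.finrank_self,
      Module.finrank_eq_card_basis (degreeLT.basis ℝ _), Fintype.card_fin]
    omega
  have hsurj : Function.Surjective L :=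
    (LinearMap.injective_iff_surjective_of_finrank_eq_finrank hrank).mp hinj
  refine ⟨fun q _ ↦ hP.mem_degreeLT q, fun q hq r hr h ↦ ?_, fun t ht ↦ ?_⟩
  · simp only [Prod.mk.injEq] at h
    exact congrArg Subtype.val (@hinj ⟨q, hq⟩ ⟨r, hr⟩ (by simp only [hL, h]))
  · obtain ⟨q, hq⟩ := hsurj (t.1, t.2.1, ⟨t.2.2, ht⟩)
    simp only [hL, Prod.mk.injEq, Subtype.mk.injEq] at hq
    exact ⟨q, q.2, by simp only [hq]⟩

end IsL2Proj

end Polynomial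

theorem eval_eval_proj_isomorphism (ℓ : ℕ) (hℓ : 2 ≤ ℓ)
    (proj : Polynomial ℝ → Polynomial ℝ)
    (hdeg : ∀ q : Polynomial ℝ, proj q ∈ Polynomial.degreeLT ℝ (ℓ - 1))
    (horth : ∀ q : Polynomial ℝ, ∀ p ∈ Polynomial.degreeLT ℝ (ℓ - 1),
      ∫ x in (0:ℝ)..1, (q.eval x - (proj q).eval x) * p.eval x = 0) :
    (∀ a b : ℝ, ∀ q ∈ Polynomial.degreeLT ℝ (ℓ + 1),
      ∀ r ∈ Polynomial.degreeLT ℝ (ℓ + 1),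
        proj (a • q + b • r) = a • proj q + b • proj r) ∧
    Set.BijOn (fun q : Polynomial ℝ => (q.eval 0, q.eval 1, proj q))
      (Polynomial.degreeLT ℝ (ℓ + 1) : Set (Polynomial ℝ))
      {t : ℝ × ℝ × Polynomial ℝ | t.2.2 ∈ Polynomial.degreeLT ℝ (ℓ - 1)} := by
  have hP : IsL2Proj 0 1 (ℓ - 1) proj :=
    ⟨hdeg, fun q p hp ↦ by
      simpa only [intervalIntegralₗ_apply, eval_mul, eval_sub] using horth q p hp⟩
  refine ⟨fun a b q _ r _ ↦ by
    rw [hP.map_add zero_lt_one, hP.map_smul zero_lt_one, hP.map_smul zero_lt_one], ?_⟩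
  rw [show ℓ + 1 = ℓ - 1 + 2 by omega]
  exact hP.bijOn_eval_eval_proj zero_lt_one
end

section
/- Suppose bilinear forms a : Σ × Σ → ℝ and b : Σ × L → ℝ on finite-dimensional normed spaces satisfy: a is symmetric positive semidefinite, coercive with constant 1/(D(1+ν)) and bounded with constant 2/(D(1−ν)) on Σ, and b satisfies an inf-sup condition ‖v‖_L ≤ C sup_{τ≠0} b(τ,v)/‖τ‖_Σ. Then the bilinear form A((σ,u),(τ,v)) := a(σ,τ) + b(τ,u) − b(σ,v) on Σ × L satisfies an inf-sup condition with constant proportional to γ = [D²(1 + 1/(D²(1−ν)²))² + 1]^{−1/2}: γ‖(σ,u)‖ ≲ sup_{(τ,v)≠0} A((σ,u),(τ,v))/‖(τ,v)‖, where ‖(τ,v)‖² = ‖τ‖_Σ² + ‖v‖_L². -/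
lemma aux_quad (x α s : ℝ) (hα : 0 ≤ α) (hs : 0 ≤ s) (h : x^2 ≤ α*x + s^2) : x ≤ α + s := by
  by_contra hcon
  push_neg at hcon
  have hx : 0 < x := lt_of_le_of_lt (by linarith) hcon
  nlinarith [mul_pos (show (0:ℝ) < x - α - s by linarith) hx,
    mul_nonneg hs (show (0:ℝ) ≤ x - s by linarith)]

lemma aux_two_le (z : ℝ) (hz : 0 < z) : 2 ≤ z + 1/z := by
  have h1 : z * (1/z) = 1 := by field_simp
  nlinarith [sq_nonneg (z - 1), mul_pos hz (show (0:ℝ) < 1/z by positivity)]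

lemma aux_sq_le (w G : ℝ) (h1 : 1 ≤ G) (h2 : w^2 ≤ G) : w ≤ G := by
  nlinarith [sq_nonneg (w-1)]

lemma aux_lin_bound {V : Type} [NormedAddCommGroup V] [InnerProductSpace ℝ V]
    [FiniteDimensional ℝ V] (g : V →ₗ[ℝ] ℝ) : ∃ M : ℝ, 0 ≤ M ∧ ∀ x, |g x| ≤ M * ‖x‖ :=
  ⟨‖LinearMap.toContinuousLinearMap g‖, norm_nonneg _, fun x => by
    simpa [Real.norm_eq_abs] using (LinearMap.toContinuousLinearMap g).le_opNorm x⟩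

lemma aux_bdd {Sg L : Type}
    [NormedAddCommGroup Sg] [InnerProductSpace ℝ Sg] [FiniteDimensional ℝ Sg]
    [NormedAddCommGroup L] [InnerProductSpace ℝ L] [FiniteDimensional ℝ L]
    (a : Sg →ₗ[ℝ] Sg →ₗ[ℝ] ℝ) (b : Sg →ₗ[ℝ] L →ₗ[ℝ] ℝ) (σ : Sg) (u : L)
    (β M1 M2 : ℝ) (hβ : 0 ≤ β) (hM1 : 0 ≤ M1) (hM2 : 0 ≤ M2)
    (hbnd : ∀ σ τ, |a σ τ| ≤ β * ‖σ‖ * ‖τ‖)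
    (hbτu : ∀ τ : Sg, |b τ u| ≤ M1 * ‖τ‖)
    (hM2b : ∀ v : L, |b σ v| ≤ M2 * ‖v‖) :
    BddAbove (Set.range fun p : {p : Sg × L // p ≠ 0} =>
      (a σ (p : Sg × L).1 + b (p : Sg × L).1 u - b σ (p : Sg × L).2) /
        Real.sqrt (‖(p : Sg × L).1‖ ^ 2 + ‖(p : Sg × L).2‖ ^ 2)) := by
  refine ⟨β * ‖σ‖ + M1 + M2, ?_⟩
  rintro _ ⟨⟨⟨τ, v⟩, hp⟩, rfl⟩
  show (a σ τ + b τ u - b σ v) / Real.sqrt (‖τ‖ ^ 2 + ‖v‖ ^ 2) ≤ β * ‖σ‖ + M1 + M2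
  have hpos : 0 < ‖τ‖ ^ 2 + ‖v‖ ^ 2 := by
    have : ¬(τ = 0 ∧ v = 0) := by
      intro hh; exact hp (by simp [Prod.ext_iff, hh.1, hh.2])
    rcases not_and_or.mp this with h | h
    · have := norm_pos_iff.mpr h; positivity
    · have := norm_pos_iff.mpr h; positivity
  have hNp : 0 < Real.sqrt (‖τ‖ ^ 2 + ‖v‖ ^ 2) := Real.sqrt_pos.mpr hpos
  rw [div_le_iff₀ hNp]
  have hτle : ‖τ‖ ≤ Real.sqrt (‖τ‖ ^ 2 + ‖v‖ ^ 2) :=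
    Real.le_sqrt_of_sq_le (by linarith [sq_nonneg ‖v‖])
  have hvle : ‖v‖ ≤ Real.sqrt (‖τ‖ ^ 2 + ‖v‖ ^ 2) :=
    Real.le_sqrt_of_sq_le (by linarith [sq_nonneg ‖τ‖])
  have h1 : |a σ τ| ≤ β * ‖σ‖ * ‖τ‖ := hbnd σ τ
  have h2 : |b τ u| ≤ M1 * ‖τ‖ := hbτu τ
  have h3 : |b σ v| ≤ M2 * ‖v‖ := hM2b v
  have hβσ : 0 ≤ β * ‖σ‖ := mul_nonneg hβ (norm_nonneg σ)
  have b1 : β * ‖σ‖ * ‖τ‖ ≤ β * ‖σ‖ * Real.sqrt (‖τ‖ ^ 2 + ‖v‖ ^ 2) :=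
    mul_le_mul_of_nonneg_left hτle hβσ
  have b2 : M1 * ‖τ‖ ≤ M1 * Real.sqrt (‖τ‖ ^ 2 + ‖v‖ ^ 2) :=
    mul_le_mul_of_nonneg_left hτle hM1
  have b3 : M2 * ‖v‖ ≤ M2 * Real.sqrt (‖τ‖ ^ 2 + ‖v‖ ^ 2) :=
    mul_le_mul_of_nonneg_left hvle hM2
  have c1 := le_abs_self (a σ τ); have c2 := le_abs_self (b τ u)
  have c3 := neg_abs_le (b σ v)
  have hrng : (β * ‖σ‖ + M1 + M2) * Real.sqrt (‖τ‖ ^ 2 + ‖v‖ ^ 2) =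
      β * ‖σ‖ * Real.sqrt (‖τ‖ ^ 2 + ‖v‖ ^ 2) + M1 * Real.sqrt (‖τ‖ ^ 2 + ‖v‖ ^ 2)
        + M2 * Real.sqrt (‖τ‖ ^ 2 + ‖v‖ ^ 2) := by ring
  linarith [c1, c2, c3, b1, b2, b3, h1, h2, h3, hrng]

set_option maxHeartbeats 2000000 in
lemma saddle_point_inf_sup_aux
    (Sg L : Type)
    [NormedAddCommGroup Sg] [InnerProductSpace ℝ Sg] [FiniteDimensional ℝ Sg]
    [NormedAddCommGroup L] [InnerProductSpace ℝ L] [FiniteDimensional ℝ L]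
    (C : ℝ) (hC : 0 < C) :
    ∃ K : ℝ, 0 < K ∧
      ∀ (D ν : ℝ), 0 < D → ν ∈ Set.Ioo (0 : ℝ) 1 →
      ∀ (a : Sg →ₗ[ℝ] Sg →ₗ[ℝ] ℝ) (b : Sg →ₗ[ℝ] L →ₗ[ℝ] ℝ),
        (∀ σ τ, a σ τ = a τ σ) →
        (∀ τ, ‖τ‖ ^ 2 / (D * (1 + ν)) ≤ a τ τ) →
        (∀ σ τ, |a σ τ| ≤ 2 / (D * (1 - ν)) * ‖σ‖ * ‖τ‖) →
        (∀ v : L, ‖v‖ ≤ C * ⨆ τ : {τ : Sg // τ ≠ 0}, b τ v / ‖(τ : Sg)‖) →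
        ∀ σ : Sg, ∀ u : L,
          (D ^ 2 * (1 + 1 / (D ^ 2 * (1 - ν) ^ 2)) ^ 2 + 1) ^ (-(1:ℝ)/2) *
              Real.sqrt (‖σ‖ ^ 2 + ‖u‖ ^ 2) ≤
            K * ⨆ p : {p : Sg × L // p ≠ 0},
              (a σ (p : Sg × L).1 + b (p : Sg × L).1 u - b σ (p : Sg × L).2) /
                Real.sqrt (‖(p : Sg × L).1‖ ^ 2 + ‖(p : Sg × L).2‖ ^ 2) := by
  set sC : ℝ := Real.sqrt (2*C) with hsCdef
  have hsC : 0 ≤ sC := Real.sqrt_nonneg _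
  refine ⟨2 + 5*C + 8*C^2 + (1 + 2*C) * sC, by positivity, ?_⟩
  set K : ℝ := 2 + 5*C + 8*C^2 + (1 + 2*C) * sC with hKdef
  clear_value sC
  intro D ν hD hν a b hsym hcoer hbnd hinf σ u
  obtain ⟨hν0, hν1⟩ := hν
  have h1ν : 0 < 1 - ν := by linarith
  have h1ν' : (1:ℝ) + ν ≤ 2 := by linarith
  set t : ℝ := 1 / (D ^ 2 * (1 - ν) ^ 2) with htdef
  have ht : 0 < t := by positivity
  set E : ℝ := D ^ 2 * (1 + t) ^ 2 + 1 with hEdef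
  have hE : 0 < E := by positivity
  set G : ℝ := Real.sqrt E with hGdef
  have hG0 : 0 < G := Real.sqrt_pos.mpr hE
  have hG1 : 1 ≤ G := by
    rw [hGdef]
    exact Real.le_sqrt_of_sq_le (by rw [hEdef]; linarith [sq_nonneg (D*(1+t))])
  have hGDt : D * (1 + t) ≤ G := by
    rw [hGdef]
    exact Real.le_sqrt_of_sq_le (by rw [hEdef]; linarith [sq_nonneg (D*(1+t))])
  have hGD : D ≤ G := by linarith [hGDt, mul_pos hD ht]
  have hGt : D * t ≤ G := by linarith [hGDt, hD]
  -- rewrite the rpow as inverse of sqrt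
  have hrpow : E ^ (-(1:ℝ)/2) = G⁻¹ := by
    rw [hGdef, show (-(1:ℝ)/2) = -(1/2 : ℝ) by ring, Real.rpow_neg hE.le,
      ← Real.sqrt_eq_rpow]
  clear_value G E
  -- the supremum
  set S : ℝ := ⨆ p : {p : Sg × L // p ≠ 0},
      (a σ (p : Sg × L).1 + b (p : Sg × L).1 u - b σ (p : Sg × L).2) /
        Real.sqrt (‖(p : Sg × L).1‖ ^ 2 + ‖(p : Sg × L).2‖ ^ 2) with hSdef
  rw [hrpow]
  set β : ℝ := 2 / (D * (1 - ν)) with hβdef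
  have hβ : 0 ≤ β := by rw [hβdef]; positivity
  obtain ⟨M1, hM1, hM1b⟩ := aux_lin_bound (b.flip u)
  obtain ⟨M2, hM2, hM2b⟩ := aux_lin_bound (b σ)
  have hbτu : ∀ τ : Sg, |b τ u| ≤ M1 * ‖τ‖ := fun τ => hM1b τ
  have hbdd : BddAbove (Set.range fun p : {p : Sg × L // p ≠ 0} =>
      (a σ (p : Sg × L).1 + b (p : Sg × L).1 u - b σ (p : Sg × L).2) /
        Real.sqrt (‖(p : Sg × L).1‖ ^ 2 + ‖(p : Sg × L).2‖ ^ 2)) :=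
    aux_bdd a b σ u β M1 M2 hβ hM1 hM2 hbnd hbτu hM2b
  clear_value β
  -- trivial case
  by_cases h0 : σ = 0 ∧ u = 0
  · obtain ⟨hσ0, hu0⟩ := h0
    have hS0 : S = 0 := by
      rw [hSdef]
      have : ∀ p : {p : Sg × L // p ≠ 0},
          (a σ (p : Sg × L).1 + b (p : Sg × L).1 u - b σ (p : Sg × L).2) /
            Real.sqrt (‖(p : Sg × L).1‖ ^ 2 + ‖(p : Sg × L).2‖ ^ 2) = 0 := by
        intro p; rw [hσ0, hu0]; simp
      rw [iSup_congr this]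
      exact Real.iSup_const_zero
    rw [hS0, hσ0, hu0]
    simp
  -- main case
  have hp0 : ((σ, u) : Sg × L) ≠ 0 := by
    intro hh
    exact h0 ⟨(Prod.ext_iff.mp hh).1, (Prod.ext_iff.mp hh).2⟩
  have hNpos : 0 < ‖σ‖ ^ 2 + ‖u‖ ^ 2 := by
    rcases not_and_or.mp h0 with h | h
    · have := norm_pos_iff.mpr h; positivity
    · have := norm_pos_iff.mpr h; positivity
  set N : ℝ := Real.sqrt (‖σ‖ ^ 2 + ‖u‖ ^ 2) with hNdef
  have hN : 0 < N := Real.sqrt_pos.mpr hNpos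
  have hNle : N ≤ ‖σ‖ + ‖u‖ := by
    rw [hNdef]
    exact Real.sqrt_le_iff.mpr ⟨by positivity,
      by linarith [mul_nonneg (norm_nonneg σ) (norm_nonneg u), sq_nonneg (‖σ‖ + ‖u‖)]⟩
  -- step (i)
  have hstep1 : a σ σ / N ≤ S := by
    rw [hSdef, hNdef]
    have this' : (a σ σ + b σ u - b σ u) / Real.sqrt (‖σ‖ ^ 2 + ‖u‖ ^ 2) ≤
        ⨆ p : {p : Sg × L // p ≠ 0},
          (a σ (p : Sg × L).1 + b (p : Sg × L).1 u - b σ (p : Sg × L).2) /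
            Real.sqrt (‖(p : Sg × L).1‖ ^ 2 + ‖(p : Sg × L).2‖ ^ 2) :=
      le_ciSup hbdd ⟨((σ, u) : Sg × L), hp0⟩
    have heq : (a σ σ + b σ u - b σ u) / Real.sqrt (‖σ‖ ^ 2 + ‖u‖ ^ 2) =
        a σ σ / Real.sqrt (‖σ‖ ^ 2 + ‖u‖ ^ 2) := by
      rw [add_sub_cancel_right]
    exact heq ▸ this'
  clear_value N S
  have haσ : 0 ≤ a σ σ := le_trans (by positivity) (hcoer σ)
  have hS0 : 0 ≤ S := le_trans (div_nonneg haσ hN.le) hstep1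
  have hσ2 : ‖σ‖ ^ 2 ≤ 2 * D * S * N := by
    have h1 : ‖σ‖ ^ 2 / (D * (1 + ν)) ≤ a σ σ := hcoer σ
    have h2 : a σ σ ≤ S * N := (div_le_iff₀ hN).mp hstep1
    have h3 : ‖σ‖ ^ 2 ≤ D * (1 + ν) * (S * N) := by
      rw [div_le_iff₀ (by positivity)] at h1
      calc ‖σ‖ ^ 2 ≤ a σ σ * (D * (1 + ν)) := h1
        _ ≤ S * N * (D * (1 + ν)) :=
            mul_le_mul_of_nonneg_right h2 (by positivity)
        _ = D * (1 + ν) * (S * N) := by ring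
    have hSN : 0 ≤ S * N := mul_nonneg hS0 hN.le
    have h4 : D * (1 + ν) ≤ D * 2 := mul_le_mul_of_nonneg_left h1ν' hD.le
    have h5 : D * (1 + ν) * (S * N) ≤ D * 2 * (S * N) :=
      mul_le_mul_of_nonneg_right h4 hSN
    have heq : D * 2 * (S * N) = 2 * D * S * N := by ring
    linarith [h3, h5]
  -- step (ii): ‖u‖ ≤ C*S + C*β*‖σ‖
  have hβσ : 0 ≤ β * ‖σ‖ := mul_nonneg hβ (norm_nonneg σ)
  have hstep2 : ‖u‖ ≤ C * S + C * β * ‖σ‖ := by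
    have hT : (⨆ τ : {τ : Sg // τ ≠ 0}, b τ u / ‖(τ : Sg)‖) ≤ S + β * ‖σ‖ := by
      apply Real.iSup_le _ (by linarith)
      rintro ⟨τ, hτ⟩
      show b τ u / ‖τ‖ ≤ S + β * ‖σ‖
      have hτ0 : 0 < ‖τ‖ := norm_pos_iff.mpr hτ
      have hple : (a σ τ + b τ u) / ‖τ‖ ≤ S := by
        rw [hSdef]
        have hpair : ((τ, (0:L)) : Sg × L) ≠ 0 := by
          intro hh; exact hτ (Prod.ext_iff.mp hh).1
        have this' : (a σ τ + b τ u - b σ (0:L)) /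
            Real.sqrt (‖τ‖ ^ 2 + ‖(0:L)‖ ^ 2) ≤
            ⨆ p : {p : Sg × L // p ≠ 0},
              (a σ (p : Sg × L).1 + b (p : Sg × L).1 u - b σ (p : Sg × L).2) /
                Real.sqrt (‖(p : Sg × L).1‖ ^ 2 + ‖(p : Sg × L).2‖ ^ 2) :=
          le_ciSup hbdd ⟨((τ, (0:L)) : Sg × L), hpair⟩
        have heq : (a σ τ + b τ u - b σ (0:L)) /
            Real.sqrt (‖τ‖ ^ 2 + ‖(0:L)‖ ^ 2) = (a σ τ + b τ u) / ‖τ‖ := by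
          rw [map_zero, sub_zero, norm_zero]
          norm_num [Real.sqrt_sq (norm_nonneg τ)]
        exact heq ▸ this'
      have habs : |a σ τ| ≤ β * ‖σ‖ * ‖τ‖ := hbnd σ τ
      have h4 : a σ τ + b τ u ≤ S * ‖τ‖ := (div_le_iff₀ hτ0).mp hple
      rw [div_le_iff₀ hτ0]
      have hna := neg_abs_le (a σ τ)
      have hrng : (S + β * ‖σ‖) * ‖τ‖ = S * ‖τ‖ + β * ‖σ‖ * ‖τ‖ := by ring
      linarith [h4, habs, hna, hrng]
    calc ‖u‖ ≤ C * (⨆ τ : {τ : Sg // τ ≠ 0}, b τ u / ‖(τ : Sg)‖) := hinf u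
      _ ≤ C * (S + β * ‖σ‖) := mul_le_mul_of_nonneg_left hT hC.le
      _ = C * S + C * β * ‖σ‖ := by ring
  -- step (iii): quadratic bound on ‖σ‖
  have hDβ : D * β = 2 / (1 - ν) := by
    rw [hβdef]; field_simp
  set s : ℝ := Real.sqrt (2*D*C) * S with hsdef
  have hs0 : 0 ≤ s := mul_nonneg (Real.sqrt_nonneg _) hS0
  have hs2 : s ^ 2 = 2*D*C*S^2 := by
    rw [hsdef, mul_pow, Real.sq_sqrt (by positivity)]
  clear_value s
  have hα0 : 0 ≤ 2*D*S + 4*C*S/(1-ν) := by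
    have a1 : 0 ≤ 2*D*S := mul_nonneg (by positivity) hS0
    have a2 : 0 ≤ 4*C*S/(1-ν) := div_nonneg (mul_nonneg (by positivity) hS0) h1ν.le
    linarith
  have hquad : ‖σ‖ ^ 2 ≤ (2*D*S + 4*C*S/(1-ν)) * ‖σ‖ + s^2 := by
    have h6 : N ≤ ‖σ‖ + (C*S + C*β*‖σ‖) := le_trans hNle (by linarith)
    have h5 : ‖σ‖ ^ 2 ≤ 2*D*S*(‖σ‖ + (C*S + C*β*‖σ‖)) := by
      calc ‖σ‖ ^ 2 ≤ 2*D*S*N := hσ2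
        _ ≤ 2*D*S*(‖σ‖ + (C*S + C*β*‖σ‖)) :=
            mul_le_mul_of_nonneg_left h6 (mul_nonneg (by positivity) hS0)
    have key : 2*D*S*(‖σ‖ + (C*S + C*β*‖σ‖)) =
        (2*D*S + 4*C*S/(1-ν)) * ‖σ‖ + 2*D*C*S^2 := by
      have expand : 2*D*S*(‖σ‖ + (C*S + C*β*‖σ‖)) =
          (2*D*S + 2*C*S*(D*β)) * ‖σ‖ + 2*D*C*S^2 := by ring
      rw [expand, hDβ]; ring
    rw [hs2]; linarith [key ▸ h5]
  have hασ : ‖σ‖ ≤ (2*D*S + 4*C*S/(1-ν)) + s :=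
    aux_quad ‖σ‖ _ s hα0 hs0 hquad
  -- coefficient bounds against G
  have hG2ν : 2 / (1 - ν) ≤ G := by
    have hz : 0 < D * (1 - ν) := by positivity
    have hinv : D * t * (1 - ν) = 1 / (D * (1 - ν)) := by
      rw [htdef]; field_simp
    have h7 : 2 ≤ D * (1 - ν) + 1 / (D * (1 - ν)) := aux_two_le _ hz
    have h8 : 2 / (1 - ν) ≤ D + D * t := by
      rw [div_le_iff₀ h1ν]
      calc (2:ℝ) ≤ D * (1 - ν) + 1 / (D * (1 - ν)) := h7
        _ = D * (1 - ν) + D * t * (1 - ν) := by rw [hinv]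
        _ = (D + D * t) * (1 - ν) := by ring
    linarith [h8, hGDt]
  have hsqrtD : Real.sqrt D ≤ G :=
    aux_sq_le _ _ hG1 (by rw [Real.sq_sqrt hD.le]; exact hGD)
  have hsplit : Real.sqrt (2*D*C) = sC * Real.sqrt D := by
    rw [hsCdef, show 2*D*C = (2*C)*D by ring, Real.sqrt_mul (by positivity)]
  have hr : Real.sqrt D / (D * (1 - ν)) ≤ G := by
    apply aux_sq_le _ _ hG1
    have : (Real.sqrt D / (D * (1 - ν)))^2 = D * t := by
      rw [div_pow, Real.sq_sqrt hD.le, htdef, mul_pow, mul_one_div]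
    rw [this]; exact hGt
  clear_value t
  -- assemble: coefficient inequality
  have hA1 : 2*D ≤ 2*G := by linarith
  have hA2 : 4*C/(1-ν) ≤ 2*C*G := by
    rw [show 4*C/(1-ν) = 2*C*(2/(1-ν)) by ring]
    exact mul_le_mul_of_nonneg_left hG2ν (by positivity)
  have hA3 : Real.sqrt (2*D*C) ≤ sC * G := by
    rw [hsplit]
    exact mul_le_mul_of_nonneg_left hsqrtD hsC
  have hA4 : C*β*(2*D) ≤ 2*C*G := by
    have : C*β*(2*D) = 2*C*(2/(1-ν)) := by
      rw [hβdef]; field_simp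
    rw [this]
    exact mul_le_mul_of_nonneg_left hG2ν (by positivity)
  have hA5 : C*β*(4*C/(1-ν)) ≤ 8*C^2*G := by
    have : C*β*(4*C/(1-ν)) = 8*C^2*(D*t) := by
      rw [hβdef, htdef]; field_simp; ring
    rw [this]
    exact mul_le_mul_of_nonneg_left hGt (by positivity)
  have hA6 : C*β*Real.sqrt (2*D*C) ≤ 2*C*sC*G := by
    have heq : C*β*Real.sqrt (2*D*C) = 2*C*sC*(Real.sqrt D / (D*(1-ν))) := by
      rw [hsplit, hβdef]; ring
    rw [heq]
    exact mul_le_mul_of_nonneg_left hr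
      (mul_nonneg (mul_nonneg (by positivity) hC.le) hsC)
  have hA7 : C ≤ C*G := by
    have := mul_nonneg hC.le (sub_nonneg.mpr hG1)
    linarith [this]
  have hcoeff : (2*D + 4*C/(1-ν) + Real.sqrt (2*D*C)) * (1 + C*β) + C ≤ K * G := by
    have expand : (2*D + 4*C/(1-ν) + Real.sqrt (2*D*C)) * (1 + C*β) + C =
        2*D + 4*C/(1-ν) + Real.sqrt (2*D*C) + C*β*(2*D) + C*β*(4*C/(1-ν))
          + C*β*Real.sqrt (2*D*C) + C := by ring
    have rhs_eq : 2*G + 2*C*G + sC*G + 2*C*G + 8*C^2*G + 2*C*sC*G + C*G = K*G := by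
      rw [hKdef]; ring
    linarith [hA1, hA2, hA3, hA4, hA5, hA6, hA7]
  clear_value K
  -- final assembly
  have hfin : N ≤ K * G * S := by
    have hσb : ‖σ‖ ≤ (2*D + 4*C/(1-ν) + Real.sqrt (2*D*C)) * S := by
      calc ‖σ‖ ≤ (2*D*S + 4*C*S/(1-ν)) + s := hασ
        _ = (2*D + 4*C/(1-ν) + Real.sqrt (2*D*C)) * S := by rw [hsdef]; ring
    have hc : 0 ≤ 2*D + 4*C/(1-ν) + Real.sqrt (2*D*C) := by positivity
    have hCβ : 0 ≤ C*β := mul_nonneg hC.le hβ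
    have hub : ‖u‖ ≤ C*S + C*β*((2*D + 4*C/(1-ν) + Real.sqrt (2*D*C))*S) := by
      have := mul_le_mul_of_nonneg_left hσb hCβ
      linarith [hstep2]
    calc N ≤ ‖σ‖ + ‖u‖ := hNle
      _ ≤ (2*D + 4*C/(1-ν) + Real.sqrt (2*D*C))*S
            + (C*S + C*β*((2*D + 4*C/(1-ν) + Real.sqrt (2*D*C))*S)) := by
          linarith [hσb, hub]
      _ = ((2*D + 4*C/(1-ν) + Real.sqrt (2*D*C))*(1+C*β) + C) * S := by ring
      _ ≤ (K*G) * S := mul_le_mul_of_nonneg_right hcoeff hS0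
      _ = K * G * S := by ring
  rw [inv_mul_le_iff₀ hG0]
  calc N ≤ K * G * S := hfin
    _ = G * (K * S) := by ring


/-- Abstract inf-sup stability for the saddle point bilinear form
`A((σ,u),(τ,v)) = a(σ,τ) + b(τ,u) − b(σ,v)`. -/
theorem saddle_point_inf_sup
    (Sg L : Type)
    [NormedAddCommGroup Sg] [InnerProductSpace ℝ Sg] [FiniteDimensional ℝ Sg]
    [NormedAddCommGroup L] [InnerProductSpace ℝ L] [FiniteDimensional ℝ L]
    (C : ℝ) (hC : 0 < C) :
    ∃ K : ℝ, 0 < K ∧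
      ∀ (D ν : ℝ), 0 < D → ν ∈ Set.Ioo (0 : ℝ) 1 →
      ∀ (a : Sg →ₗ[ℝ] Sg →ₗ[ℝ] ℝ) (b : Sg →ₗ[ℝ] L →ₗ[ℝ] ℝ),
        (∀ σ τ, a σ τ = a τ σ) →
        (∀ τ, ‖τ‖ ^ 2 / (D * (1 + ν)) ≤ a τ τ) →
        (∀ σ τ, |a σ τ| ≤ 2 / (D * (1 - ν)) * ‖σ‖ * ‖τ‖) →
        (∀ v : L, ‖v‖ ≤ C * ⨆ τ : {τ : Sg // τ ≠ 0}, b τ v / ‖(τ : Sg)‖) →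
        ∀ σ : Sg, ∀ u : L,
          (D ^ 2 * (1 + 1 / (D ^ 2 * (1 - ν) ^ 2)) ^ 2 + 1) ^ (-(1:ℝ)/2) *
              Real.sqrt (‖σ‖ ^ 2 + ‖u‖ ^ 2) ≤
            K * ⨆ p : {p : Sg × L // p ≠ 0},
              (a σ (p : Sg × L).1 + b (p : Sg × L).1 u - b σ (p : Sg × L).2) /
                Real.sqrt (‖(p : Sg × L).1‖ ^ 2 + ‖(p : Sg × L).2‖ ^ 2) :=
  saddle_point_inf_sup_aux Sg L C hC
end
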